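/- arXiv:0810.5282 — 3 statements merged into one kernel-verified Lean document; each statement's English description precedes it below -/
import Mathlib

section
/- Suppose φ is analytic on the disc |y| < r_0 with ‖φ‖_r ≤ K_0 r² for all r < r_0, where ‖φ‖_r = sup{|φ(y)| : |y| < r} and K_0 > 0. If r < r_0(1 − K_0 r_0), then the map y ↦ y + φ(y) has a well-defined inverse of the form x ↦ x + ψ(x) on |x| < r* := r − ‖φ‖_r, and ‖ψ‖_{r*} ≤ ‖φ‖_r. -/
/-!
By Cauchy's estimate on polydiscs of radius `r' - r` centred in the polydisc of radius `r`,
`φ` is Lipschitz there with constant `K0 r'² / (r' - r)` for any `r' ∈ (r, r0)`; this constant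
is `< 1` for `r'` close to `r0`, because `r < r0 - K0 r0²`. Hence `y ↦ y + φ y` is injective,
and for `‖x‖ < r - ‖φ‖_r` the contraction `y ↦ x - φ y` maps a closed polydisc of radius
between `‖x‖ + ‖φ‖_r` and `r` into itself. Its fixed point is `x + ψ x`, and
`ψ x = -φ (x + ψ x)` has norm at most `‖φ‖_r`.
-/

open Metric Set

section CauchyEstimate

variable {E F : Type*} [NormedAddCommGroup E] [NormedSpace ℂ E] [NormedAddCommGroup F]
  [NormedSpace ℂ F] {f : E → F}

theorem norm_fderiv_le_of_forall_mem_closedBall_norm_le {c : E} {ρ M : ℝ} (hρ : 0 < ρ)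
    (hd : DifferentiableOn ℂ f (closedBall c ρ)) (hM : ∀ z ∈ closedBall c ρ, ‖f z‖ ≤ M) :
    ‖fderiv ℂ f c‖ ≤ M / ρ := by
  have hM0 : 0 ≤ M := (norm_nonneg _).trans (hM c (mem_closedBall_self hρ.le))
  refine ContinuousLinearMap.opNorm_le_bound _ (div_nonneg hM0 hρ.le) fun v => ?_
  rcases eq_or_ne v 0 with rfl | hv
  · simp
  have hv : 0 < ‖v‖ := norm_pos_iff.2 hv
  -- One-variable Cauchy estimate for `t ↦ f (c + t • v)` on the disc of radius `ρ / ‖v‖`.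
  set R := ρ / ‖v‖
  have hR : 0 < R := div_pos hρ hv
  have hline : MapsTo (fun t : ℂ => c + t • v) (closedBall 0 R) (closedBall c ρ) := by
    intro t ht
    rw [mem_closedBall_zero_iff] at ht
    rw [mem_closedBall, dist_self_add_left, norm_smul]
    exact (le_div_iff₀ hv).1 ht
  have hdl : Differentiable ℂ fun t : ℂ => c + t • v :=
    (differentiable_id.smul_const v).const_add c
  have hg : DiffContOnCl ℂ (fun t : ℂ => f (c + t • v)) (ball 0 R) := by
    refine DifferentiableOn.diffContOnCl ?_
    rw [closure_ball _ hR.ne']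
    exact hd.comp hdl.differentiableOn hline
  have hderiv : HasDerivAt (fun t : ℂ => f (c + t • v)) (fderiv ℂ f c v) 0 := by
    have hf : HasFDerivAt f (fderiv ℂ f c) (c + (0 : ℂ) • v) := by
      simpa using (hd.differentiableAt (closedBall_mem_nhds c hρ)).hasFDerivAt
    simpa [Function.comp_def] using
      hf.comp_hasDerivAt 0 (((hasDerivAt_id (0 : ℂ)).smul_const v).const_add c)
  calc ‖fderiv ℂ f c v‖ = ‖deriv (fun t : ℂ => f (c + t • v)) 0‖ := by rw [hderiv.deriv]
    _ ≤ M / R := Complex.norm_deriv_le_of_forall_mem_sphere_norm_le hR hg fun t ht =>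
        hM _ (hline (sphere_subset_closedBall ht))
    _ = M / ρ * ‖v‖ := by rw [div_div_eq_mul_div, div_mul_eq_mul_div]

theorem lipschitzOnWith_of_forall_mem_ball_norm_le {c : E} {r R M : ℝ}
    (hd : DifferentiableOn ℂ f (ball c R)) (hM : ∀ z ∈ ball c R, ‖f z‖ ≤ M) (hrR : r < R) :
    LipschitzOnWith (M / (R - r)).toNNReal f (ball c r) := by
  have hsub : ∀ z ∈ ball c r, closedBall z (R - r) ⊆ ball c R := fun z hz =>
    closedBall_subset_ball' (by rw [mem_ball] at hz; linarith)
  refine (convex_ball c r).lipschitzOnWith_of_nnnorm_fderiv_le (𝕜 := ℂ)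
    (fun z hz => hd.differentiableAt (isOpen_ball.mem_nhds (ball_subset_ball hrR.le hz)))
    fun z hz => ?_
  have hbound := norm_fderiv_le_of_forall_mem_closedBall_norm_le (sub_pos.2 hrR)
    (hd.mono (hsub z hz)) fun w hw => hM w (hsub z hz hw)
  exact (Real.le_toNNReal_iff_coe_le ((norm_nonneg _).trans hbound)).2 hbound

end CauchyEstimate

section PerturbationOfIdentity

variable {E : Type*} [NormedAddCommGroup E] {φ : E → E} {K : NNReal} {s : Set E}

theorem LipschitzOnWith.injOn_add_self (hφ : LipschitzOnWith K φ s) (hK : K < 1) :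
    InjOn (fun y => y + φ y) s := by
  intro a ha b hb hab
  have hle : ‖a - b‖ ≤ K * ‖a - b‖ :=
    calc ‖a - b‖ = ‖φ b - φ a‖ := by
          congr 1; rw [sub_eq_sub_iff_add_eq_add, add_comm (φ b)]; exact hab
      _ ≤ K * ‖b - a‖ := hφ.norm_sub_le hb ha
      _ = K * ‖a - b‖ := by rw [norm_sub_rev]
  have : ‖a - b‖ = 0 := by nlinarith [norm_nonneg (a - b), (NNReal.coe_lt_coe.2 hK)]
  exact sub_eq_zero.1 (norm_eq_zero.1 this)

theorem LipschitzOnWith.exists_mem_ball_add_eq [CompleteSpace E] {r m : ℝ}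
    (hφ : LipschitzOnWith K φ (ball 0 r)) (hK : K < 1) (hm : ∀ y ∈ ball (0 : E) r, ‖φ y‖ ≤ m)
    (hm0 : 0 ≤ m) {x : E} (hx : ‖x‖ < r - m) : ∃ y ∈ ball (0 : E) r, y + φ y = x := by
  obtain ⟨s, hxs, hsr⟩ : ∃ s, ‖x‖ + m < s ∧ s < r := exists_between (by linarith)
  have hs : closedBall (0 : E) s ⊆ ball 0 r := closedBall_subset_ball hsr
  have hmaps : MapsTo (fun y => x - φ y) (closedBall 0 s) (closedBall 0 s) := by
    intro y hy
    rw [mem_closedBall_zero_iff]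
    linarith [_root_.norm_sub_le x (φ y), hm y (hs hy)]
  have hlip : LipschitzOnWith K (fun y => x - φ y) (closedBall 0 s) :=
    LipschitzOnWith.of_dist_le_mul fun a ha b hb => by
      rw [dist_sub_left, dist_eq_norm, dist_eq_norm]
      exact hφ.norm_sub_le (hs ha) (hs hb)
  obtain ⟨y, hy, hfix, -⟩ := ContractingWith.exists_fixedPoint' isClosed_closedBall.isComplete
    hmaps ⟨hK, hlip.mapsToRestrict hmaps⟩ (mem_closedBall_self (by linarith [norm_nonneg x]))
    (edist_ne_top _ _)
  exact ⟨y, hs hy, eq_sub_iff_add_eq.1 hfix.eq.symm⟩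

end PerturbationOfIdentity

theorem stmt_9_general (φ : ℂ × ℂ → ℂ × ℂ) (r0 K0 : ℝ) (hr0 : 0 < r0) (hK0 : 0 < K0)
    (hφ : AnalyticOn ℂ φ (ball 0 r0))
    (hbound : ∀ r : ℝ, 0 < r → r < r0 → ∀ y ∈ ball (0 : ℂ × ℂ) r, ‖φ y‖ ≤ K0 * r ^ 2)
    (r : ℝ) (hrlt : r < r0 * (1 - K0 * r0)) :
    ∃ normφr : ℝ,
      (normφr = ⨆ y : ball (0 : ℂ × ℂ) r, ‖φ (y : ℂ × ℂ)‖) ∧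
      Set.InjOn (fun y => y + φ y) (ball (0 : ℂ × ℂ) r) ∧
      ∃ ψ : ℂ × ℂ → ℂ × ℂ,
        (∀ x ∈ ball (0 : ℂ × ℂ) (r - normφr),
          x + ψ x ∈ ball (0 : ℂ × ℂ) r ∧ (x + ψ x) + φ (x + ψ x) = x) ∧
        (∀ x ∈ ball (0 : ℂ × ℂ) (r - normφr), ‖ψ x‖ ≤ normφr) := by
  obtain ⟨r', ⟨hr'0, hr'r0⟩, hr'⟩ : ∃ r' ∈ Ioo 0 r0, r < r' - K0 * r' ^ 2 := by
    have hcont : Continuous fun t : ℝ => t - K0 * t ^ 2 := by fun_prop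
    have hnear : ∀ᶠ t in nhds r0, r < t - K0 * t ^ 2 :=
      hcont.continuousAt.eventually (lt_mem_nhds (by linear_combination hrlt))
    exact (Filter.Eventually.and (Ioo_mem_nhdsLT hr0)
      (hnear.filter_mono nhdsWithin_le_nhds)).exists
  have hrr' : r < r' := by nlinarith [mul_pos hK0 (pow_pos hr'0 2)]
  have hlip := lipschitzOnWith_of_forall_mem_ball_norm_le
    ((hφ.mono (ball_subset_ball hr'r0.le)).differentiableOn) (hbound r' hr'0 hr'r0) hrr'
  have hK : (K0 * r' ^ 2 / (r' - r)).toNNReal < 1 :=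
    Real.toNNReal_lt_one.2 ((div_lt_one (sub_pos.2 hrr')).2 (by linarith))
  have hbdd : BddAbove (range fun y : ball (0 : ℂ × ℂ) r => ‖φ y‖) :=
    ⟨K0 * r' ^ 2, forall_mem_range.2 fun y =>
      hbound r' hr'0 hr'r0 y (ball_subset_ball hrr'.le y.2)⟩
  have hsup : ∀ y ∈ ball (0 : ℂ × ℂ) r, ‖φ y‖ ≤ ⨆ y : ball (0 : ℂ × ℂ) r, ‖φ y‖ :=
    fun y hy => le_ciSup hbdd (⟨y, hy⟩ : ball (0 : ℂ × ℂ) r)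
  refine ⟨_, rfl, hlip.injOn_add_self hK, ?_⟩
  choose! g hg using fun x (hx : x ∈ ball (0 : ℂ × ℂ) (r - _)) =>
    hlip.exists_mem_ball_add_eq hK hsup (Real.iSup_nonneg fun _ => norm_nonneg _)
      (mem_ball_zero_iff.1 hx)
  refine ⟨fun x => g x - x, fun x hx => ?_, fun x hx => ?_⟩
  · rw [add_sub_cancel]
    exact hg x hx
  · have hψ : g x - x = -φ (g x) :=
      eq_neg_of_add_eq_zero_left (by rw [sub_add_eq_add_sub, (hg x hx).2, sub_self])
    show ‖g x - x‖ ≤ _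
    rw [hψ, norm_neg]
    exact hsup _ (hg x hx).1

theorem stmt_9 (φ : ℂ × ℂ → ℂ × ℂ) (r0 K0 : ℝ) (hr0 : 0 < r0) (hK0 : 0 < K0)
    (hφ : AnalyticOn ℂ φ (ball 0 r0))
    (hbound : ∀ r : ℝ, 0 < r → r < r0 → ∀ y ∈ ball (0 : ℂ × ℂ) r, ‖φ y‖ ≤ K0 * r ^ 2)
    (r : ℝ) (hr : 0 < r) (hrlt : r < r0 * (1 - K0 * r0)) :
    ∃ normφr : ℝ,
      (normφr = ⨆ y : ball (0 : ℂ × ℂ) r, ‖φ (y : ℂ × ℂ)‖) ∧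
      Set.InjOn (fun y => y + φ y) (ball (0 : ℂ × ℂ) r) ∧
      ∃ ψ : ℂ × ℂ → ℂ × ℂ,
        (∀ x ∈ ball (0 : ℂ × ℂ) (r - normφr),
          x + ψ x ∈ ball (0 : ℂ × ℂ) r ∧ (x + ψ x) + φ (x + ψ x) = x) ∧
        (∀ x ∈ ball (0 : ℂ × ℂ) (r - normφr), ‖ψ x‖ ≤ normφr) :=
  stmt_9_general φ r0 K0 hr0 hK0 hφ hbound r hrlt
end

section
/- Under the hypotheses of the φ-induction (â_k ≤ C M^k for n₀ < k ≤ n, with 2n₀ < n), the convolution satisfies Σ_{k=1}^{n} â_k â_{n+1−k} ≤ (2 Σ_{k=1}^{n₀} â_k M^{−k} + n C) · C M^{n+1}. -/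
/-!
Split the convolution symmetrically into the indices `k ≤ n₀`, `n₀ < k ≤ n - n₀` and
`k > n - n₀`. Reflecting `k ↦ n + 1 - k` turns the last block into a copy of the first.
In the first block only the factor `â_{n+1-k}` has index in `(n₀, n]`, giving
`â_k â_{n+1-k} ≤ â_k M⁻ᵏ · C M^{n+1}`; in the middle block both factors do, so each of its
at most `n` terms is at most `C · C M^{n+1}`.
-/

open Finset

theorem sum_Ioc_sub_eq_sum_Icc_reflect {M : Type*} [AddCommMonoid M] (f : ℕ → M) {m n : ℕ}
    (h : m ≤ n) : ∑ k ∈ Ioc (n - m) n, f k = ∑ k ∈ Icc 1 m, f (n + 1 - k) := by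
  refine sum_nbij' (fun k ↦ n + 1 - k) (fun k ↦ n + 1 - k) ?_ ?_ ?_ ?_ ?_ <;>
    intro k hk <;> simp only [mem_Ioc, mem_Icc] at hk ⊢ <;> try omega
  rw [Nat.sub_sub_self (by omega)]

theorem sum_Icc_mul_reflect_eq {R : Type*} [CommSemiring R] (a : ℕ → R) {n₀ n : ℕ}
    (h : 2 * n₀ ≤ n) :
    ∑ k ∈ Icc 1 n, a k * a (n + 1 - k) =
      2 * ∑ k ∈ Icc 1 n₀, a k * a (n + 1 - k) + ∑ k ∈ Ioc n₀ (n - n₀), a k * a (n + 1 - k) := by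
  have tail : ∑ k ∈ Ioc (n - n₀) n, a k * a (n + 1 - k) =
      ∑ k ∈ Icc 1 n₀, a k * a (n + 1 - k) := by
    rw [sum_Ioc_sub_eq_sum_Icc_reflect _ (by omega)]
    refine sum_congr rfl fun k hk ↦ ?_
    rw [mem_Icc] at hk
    rw [mul_comm, Nat.sub_sub_self (by omega)]
  rw [show Icc 1 n = Ioc 0 n from rfl,
    ← sum_Ioc_consecutive _ (Nat.zero_le (n - n₀)) (Nat.sub_le n n₀),
    ← sum_Ioc_consecutive _ (Nat.zero_le n₀) (by omega : n₀ ≤ n - n₀), tail,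
    show Ioc 0 n₀ = Icc 1 n₀ from rfl]
  ring

section bounds

variable {K : Type*} [Field K] [LinearOrder K] [IsStrictOrderedRing K]
  {a : ℕ → K} {C M : K} {n₀ n : ℕ}

theorem mul_reflect_le_of_le_pow (ha : ∀ k, 0 ≤ a k) {k : ℕ} (hk : k < n + 1)
    (hbd : a (n + 1 - k) ≤ C * M ^ (n + 1 - k)) :
    a k * a (n + 1 - k) ≤ a k * M⁻¹ ^ k * (C * M ^ (n + 1)) :=
  calc a k * a (n + 1 - k) ≤ a k * (C * M ^ (n + 1 - k)) :=
        mul_le_mul_of_nonneg_left hbd (ha k)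
    _ = a k * M⁻¹ ^ k * (C * M ^ (n + 1)) := by
        rw [pow_sub_of_lt M hk, inv_pow]
        ring

theorem sum_Ioc_mul_reflect_le (ha : ∀ k, 0 ≤ a k) (hC : 0 ≤ C) (hM : 0 ≤ M)
    (hbd : ∀ k, n₀ < k → k ≤ n → a k ≤ C * M ^ k) :
    ∑ k ∈ Ioc n₀ (n - n₀), a k * a (n + 1 - k) ≤ n * C * (C * M ^ (n + 1)) := by
  have term : ∀ k ∈ Ioc n₀ (n - n₀), a k * a (n + 1 - k) ≤ C * (C * M ^ (n + 1)) := by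
    intro k hk
    rw [mem_Ioc] at hk
    have hk' : k < n + 1 := by omega
    calc a k * a (n + 1 - k) ≤ C * M ^ k * (C * M ^ (n + 1 - k)) :=
          mul_le_mul (hbd k hk.1 (by omega)) (hbd _ (by omega) (by omega)) (ha _)
            (by positivity)
      _ = C * (C * M ^ (n + 1)) := by
          rw [← pow_sub_mul_pow M hk'.le]
          ring
  calc ∑ k ∈ Ioc n₀ (n - n₀), a k * a (n + 1 - k)
      ≤ #(Ioc n₀ (n - n₀)) • (C * (C * M ^ (n + 1))) := sum_le_card_nsmul _ _ _ term
    _ ≤ n * C * (C * M ^ (n + 1)) := by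
        rw [nsmul_eq_mul, Nat.card_Ioc, mul_assoc]
        gcongr
        exact_mod_cast (by omega : n - n₀ - n₀ ≤ n)

end bounds

theorem stmt_14 (a : ℕ → ℝ) (ha : ∀ k, 0 ≤ a k)
    (C M : ℝ) (hC : 0 < C) (hM : 0 < M)
    (n0 n : ℕ) (hn : 2 * n0 < n)
    (hbd : ∀ k, n0 < k → k ≤ n → a k ≤ C * M ^ k) :
    ∑ k ∈ Icc 1 n, a k * a (n + 1 - k) ≤
      (2 * ∑ k ∈ Icc 1 n0, a k * (M : ℝ)⁻¹ ^ k + (n : ℝ) * C) * (C * M ^ (n + 1)) := by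
  have head : ∑ k ∈ Icc 1 n0, a k * a (n + 1 - k) ≤
      ∑ k ∈ Icc 1 n0, a k * M⁻¹ ^ k * (C * M ^ (n + 1)) := by
    refine sum_le_sum fun k hk ↦ ?_
    rw [mem_Icc] at hk
    exact mul_reflect_le_of_le_pow ha (by omega) (hbd _ (by omega) (by omega))
  rw [sum_Icc_mul_reflect_eq a hn.le, add_mul, mul_assoc, sum_mul]
  gcongr
  exact sum_Ioc_mul_reflect_le ha hC.le hM.le hbd
end

section
/- Let (ĝ_k) be non-negative with ĝ_k = 0 for k < 2l, and suppose ĝ_k ≤ D K^k for 2l ≤ k ≤ N_G where D > 0, K > M > 0, and suppose for all n ≥ N_G: ĝ_{n+1} ≤ A Σ_{k=1}^{n} â_k â_{n+1−k} + 2 Σ_{k=2}^{n+2−2l} k â_k ĝ_{n+2−k}, where â_k ≤ C M^k for k > n₀ and â_k arbitrary non-negative for k ≤ n₀. If Ψ(N_G) < 1, where Ψ(n) := A(2Σ_{k=1}^{n₀} â_k M^{−k} + C(n−2n₀))·(C/D)·(M/K)^{n+1} + 2(Σ_{k=2}^{n₀} k â_k K^{1−k} + C M (M/K)^{n₀}·((n₀+1)−n₀(M/K))/(1−M/K)²),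 and Ψ is decreasing in n, then ĝ_k ≤ D K^k for all k, and Σ ĝ_k x^k converges for |x| < 1/K. -/
/-!
Strong induction on `k`. For `n ≥ N_G`, split the convolution `∑ âₖ â_{n+1-k}` into the two
ranges where one index is at most `n₀`, which are controlled by `∑_{k ≤ n₀} âₖ M⁻ᵏ` times the
majorant of the other factor, and the middle range, where both factors are at most `C Mᵏ`. In
the second sum the induction hypothesis gives `ĝ_{n+2-k} ≤ D K^{n+1} K^{1-k}`, and for `k > n₀`
the weights `k âₖ K^{1-k}` are bounded by `C K k (M/K)ᵏ`, whose tail is summed in closed form.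
Altogether `ĝ_{n+1} ≤ Ψ(n) D K^{n+1} ≤ Ψ(N_G) D K^{n+1} ≤ D K^{n+1}`, and the series is then
dominated by a geometric one.
-/

open Finset

theorem sum_Icc_reflect {β : Type*} [AddCommMonoid β] (f : ℕ → β) {n j : ℕ} (hj : j ≤ n) :
    ∑ k ∈ Icc (n - j + 1) n, f k = ∑ k ∈ Icc 1 j, f (n + 1 - k) := by
  refine sum_nbij' (fun k ↦ n + 1 - k) (fun k ↦ n + 1 - k) ?_ ?_ ?_ ?_ ?_ <;>
    intro k hk <;> simp only [mem_Icc] at hk ⊢ <;> try omega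
  rw [show n + 1 - (n + 1 - k) = k by omega]

theorem sum_Icc_natCast_mul_pow_le {r : ℝ} (hr0 : 0 ≤ r) (hr1 : r < 1) (n0 m : ℕ) :
    ∑ k ∈ Icc (n0 + 1) m, (k : ℝ) * r ^ k
      ≤ r ^ (n0 + 1) * ((n0 + 1) - n0 * r) / (1 - r) ^ 2 := by
  have hnorm : ‖r‖ < 1 := by rwa [Real.norm_of_nonneg hr0]
  have hsum : HasSum (fun j : ℕ ↦ r ^ (n0 + 1) * ((n0 + 1) * r ^ j + j * r ^ j))
      (r ^ (n0 + 1) * ((n0 + 1) * (1 - r)⁻¹ + r / (1 - r) ^ 2)) :=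
    (((hasSum_geometric_of_lt_one hr0 hr1).mul_left _).add
      (hasSum_coe_mul_geometric_of_norm_lt_one hnorm)).mul_left _
  have hshift : ∑ k ∈ Icc (n0 + 1) m, (k : ℝ) * r ^ k
      = ∑ j ∈ range (m - n0), r ^ (n0 + 1) * ((n0 + 1) * r ^ j + j * r ^ j) := by
    rw [← Ico_add_one_right_eq_Icc, sum_Ico_eq_sum_range, Nat.add_sub_add_right]
    refine sum_congr rfl fun j _ ↦ ?_
    push_cast
    ring
  rw [hshift]
  refine (sum_le_hasSum _ (fun j _ ↦ by positivity) hsum).trans_eq ?_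
  have : 1 - r ≠ 0 := by linarith
  field_simp
  ring

section Majorant

variable {a : ℕ → ℝ} {n0 : ℕ} {C M : ℝ}

theorem sum_Icc_mul_sub_le (ha : ∀ k, 0 ≤ a k) (haC : ∀ k, n0 < k → a k ≤ C * M ^ k)
    (hM : M ≠ 0) {n : ℕ} (hn : 2 * n0 ≤ n) :
    ∑ k ∈ Icc 1 n0, a k * a (n + 1 - k) ≤ C * M ^ (n + 1) * ∑ k ∈ Icc 1 n0, a k * M⁻¹ ^ k := by
  rw [mul_sum]
  refine sum_le_sum fun k hk ↦ ?_
  rw [mem_Icc] at hk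
  calc a k * a (n + 1 - k) ≤ a k * (C * M ^ (n + 1 - k)) :=
        mul_le_mul_of_nonneg_left (haC _ (by omega)) (ha k)
    _ = C * M ^ (n + 1) * (a k * M⁻¹ ^ k) := by
        rw [pow_sub₀ M hM (by omega), inv_pow]
        ring

theorem sum_Icc_conv_le (ha : ∀ k, 0 ≤ a k) (haC : ∀ k, n0 < k → a k ≤ C * M ^ k)
    (hM : M ≠ 0) {n : ℕ} (hn : 2 * n0 ≤ n) :
    ∑ k ∈ Icc 1 n, a k * a (n + 1 - k)
      ≤ (2 * ∑ k ∈ Icc 1 n0, a k * M⁻¹ ^ k + C * ((n : ℝ) - 2 * n0)) * C * M ^ (n + 1) := by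
  have hsplit : Icc 1 n = (Icc 1 n0 ∪ Icc (n0 + 1) (n - n0)) ∪ Icc (n - n0 + 1) n := by
    ext k; simp only [mem_union, mem_Icc]; omega
  have hdisj₁ : Disjoint (Icc 1 n0) (Icc (n0 + 1) (n - n0)) := by
    rw [disjoint_left]; intro k hk hk'; rw [mem_Icc] at hk hk'; omega
  have hdisj₂ : Disjoint (Icc 1 n0 ∪ Icc (n0 + 1) (n - n0)) (Icc (n - n0 + 1) n) := by
    rw [disjoint_left]; intro k hk hk'; simp only [mem_union, mem_Icc] at hk hk'; omega
  have hmiddle : ∑ k ∈ Icc (n0 + 1) (n - n0), a k * a (n + 1 - k)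
      ≤ ((n : ℝ) - 2 * n0) * (C ^ 2 * M ^ (n + 1)) := by
    have hcard : ((Icc (n0 + 1) (n - n0)).card : ℝ) = (n : ℝ) - 2 * n0 := by
      rw [Nat.card_Icc, show n - n0 + 1 - (n0 + 1) = n - 2 * n0 by omega,
        Nat.cast_sub hn]
      push_cast
      ring
    rw [← hcard, ← nsmul_eq_mul]
    refine sum_le_card_nsmul _ _ _ fun k hk ↦ ?_
    rw [mem_Icc] at hk
    have hk₁ : a k ≤ C * M ^ k := haC k (by omega)
    calc a k * a (n + 1 - k) ≤ (C * M ^ k) * (C * M ^ (n + 1 - k)) :=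
          mul_le_mul hk₁ (haC _ (by omega)) (ha _) ((ha k).trans hk₁)
      _ = C ^ 2 * M ^ (k + (n + 1 - k)) := by ring
      _ = C ^ 2 * M ^ (n + 1) := by rw [Nat.add_sub_cancel' (by omega)]
  have hhead := sum_Icc_mul_sub_le ha haC hM hn
  have htail : ∑ k ∈ Icc (n - n0 + 1) n, a k * a (n + 1 - k)
      ≤ C * M ^ (n + 1) * ∑ k ∈ Icc 1 n0, a k * M⁻¹ ^ k := by
    rw [sum_Icc_reflect _ (by omega)]
    refine le_of_eq_of_le (sum_congr rfl fun k hk ↦ ?_) hhead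
    rw [mem_Icc] at hk
    rw [show n + 1 - (n + 1 - k) = k by omega, mul_comm]
  rw [hsplit, sum_union hdisj₂, sum_union hdisj₁]
  linear_combination hhead + hmiddle + htail

variable {K : ℝ}

theorem sum_Icc_natCast_mul_zpow_le (ha : ∀ k, 0 ≤ a k) (haC : ∀ k, n0 < k → a k ≤ C * M ^ k)
    (hC : 0 ≤ C) (hM : 0 < M) (hMK : M < K) (m : ℕ) :
    ∑ k ∈ Icc 2 m, (k : ℝ) * a k * K ^ (1 - (k : ℤ))
      ≤ ∑ k ∈ Icc 2 n0, (k : ℝ) * a k * K ^ (1 - (k : ℤ)) +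
        C * M * (M / K) ^ n0 * (((n0 : ℝ) + 1) - n0 * (M / K)) / (1 - M / K) ^ 2 := by
  have hK : 0 < K := hM.trans hMK
  have hdisj : Disjoint (Icc 2 n0) (Icc (n0 + 1) m) := by
    rw [disjoint_left]; intro k hk hk'; rw [mem_Icc] at hk hk'; omega
  have hgeom := sum_Icc_natCast_mul_pow_le (div_pos hM hK).le ((div_lt_one hK).2 hMK) n0 m
  have htail : ∑ k ∈ Icc (n0 + 1) m, (k : ℝ) * a k * K ^ (1 - (k : ℤ))
      ≤ C * K * ∑ k ∈ Icc (n0 + 1) m, (k : ℝ) * (M / K) ^ k := by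
    rw [mul_sum]
    refine sum_le_sum fun k hk ↦ ?_
    rw [mem_Icc] at hk
    calc (k : ℝ) * a k * K ^ (1 - (k : ℤ)) ≤ k * (C * M ^ k) * K ^ (1 - (k : ℤ)) := by
          gcongr
          exact haC k (by omega)
      _ = C * K * (k * (M / K) ^ k) := by
          rw [zpow_sub₀ hK.ne', zpow_one, zpow_natCast, div_pow]
          ring
  calc ∑ k ∈ Icc 2 m, (k : ℝ) * a k * K ^ (1 - (k : ℤ))
      ≤ ∑ k ∈ Icc 2 n0 ∪ Icc (n0 + 1) m, (k : ℝ) * a k * K ^ (1 - (k : ℤ)) := by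
        refine sum_le_sum_of_subset_of_nonneg ?_ fun k _ _ ↦ by have := ha k; positivity
        intro k hk; simp only [mem_union, mem_Icc] at hk ⊢; omega
    _ ≤ ∑ k ∈ Icc 2 n0, (k : ℝ) * a k * K ^ (1 - (k : ℤ)) +
        C * K * ((M / K) ^ (n0 + 1) * ((n0 + 1) - n0 * (M / K)) / (1 - M / K) ^ 2) := by
        rw [sum_union hdisj]
        gcongr
        exact htail.trans (mul_le_mul_of_nonneg_left hgeom (by positivity))
    _ = _ := by
        have hKM : K * (M / K) = M := mul_div_cancel₀ M hK.ne'
        rw [pow_succ]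
        linear_combination
          C * (M / K) ^ n0 * ((n0 + 1) - n0 * (M / K)) / (1 - M / K) ^ 2 * hKM

theorem sum_Icc_natCast_mul_mul_le {g : ℕ → ℝ} {D : ℝ} {n m : ℕ} (ha : ∀ k, 0 ≤ a k)
    (hK : K ≠ 0) (hgle : ∀ j ≤ n, g j ≤ D * K ^ j) (hm : m ≤ n + 2) :
    ∑ k ∈ Icc 2 m, (k : ℝ) * a k * g (n + 2 - k)
      ≤ D * K ^ (n + 1) * ∑ k ∈ Icc 2 m, (k : ℝ) * a k * K ^ (1 - (k : ℤ)) := by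
  rw [mul_sum]
  refine sum_le_sum fun k hk ↦ ?_
  rw [mem_Icc] at hk
  have := ha k
  calc (k : ℝ) * a k * g (n + 2 - k) ≤ k * a k * (D * K ^ (n + 2 - k)) := by
        gcongr
        exact hgle _ (by omega)
    _ = D * K ^ (n + 1) * (k * a k * K ^ (1 - (k : ℤ))) := by
        rw [pow_sub₀ K hK (by omega), zpow_sub₀ hK, zpow_one, zpow_natCast]
        ring

theorem recursion_rhs_le {g : ℕ → ℝ} {A D : ℝ} {n m : ℕ} (ha : ∀ k, 0 ≤ a k)
    (haC : ∀ k, n0 < k → a k ≤ C * M ^ k) (hA : 0 ≤ A) (hC : 0 ≤ C) (hD : 0 < D) (hM : 0 < M)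
    (hMK : M < K) (hgle : ∀ j ≤ n, g j ≤ D * K ^ j) (hn : 2 * n0 ≤ n) (hm : m ≤ n + 2) :
    A * ∑ k ∈ Icc 1 n, a k * a (n + 1 - k) + 2 * ∑ k ∈ Icc 2 m, (k : ℝ) * a k * g (n + 2 - k)
      ≤ (A * ((2 * ∑ k ∈ Icc 1 n0, a k * M⁻¹ ^ k + C * ((n : ℝ) - 2 * n0)) *
            (C / D) * (M / K) ^ (n + 1)) +
          2 * (∑ k ∈ Icc 2 n0, (k : ℝ) * a k * K ^ (1 - (k : ℤ)) +
            C * M * (M / K) ^ n0 * (((n0 : ℝ) + 1) - n0 * (M / K)) / (1 - M / K) ^ 2)) *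
        (D * K ^ (n + 1)) := by
  have hK : 0 < K := hM.trans hMK
  calc _ ≤ A * ((2 * ∑ k ∈ Icc 1 n0, a k * M⁻¹ ^ k + C * ((n : ℝ) - 2 * n0)) * C * M ^ (n + 1)) +
        2 * (D * K ^ (n + 1) * (∑ k ∈ Icc 2 n0, (k : ℝ) * a k * K ^ (1 - (k : ℤ)) +
          C * M * (M / K) ^ n0 * (((n0 : ℝ) + 1) - n0 * (M / K)) / (1 - M / K) ^ 2)) := by
        gcongr
        · exact sum_Icc_conv_le ha haC hM.ne' hn
        · exact (sum_Icc_natCast_mul_mul_le ha hK.ne' hgle hm).trans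
            (mul_le_mul_of_nonneg_left (sum_Icc_natCast_mul_zpow_le ha haC hC hM hMK m)
              (by positivity))
    _ = _ := by
        have hpow : (M / K) ^ (n + 1) * K ^ (n + 1) = M ^ (n + 1) := by
          rw [← mul_pow, div_mul_cancel₀ M hK.ne']
        have hCD : C / D * D = C := div_mul_cancel₀ C hD.ne'
        set X := 2 * ∑ k ∈ Icc 1 n0, a k * M⁻¹ ^ k + C * ((n : ℝ) - 2 * n0)
        linear_combination
          (-A * X * C) * hpow + (-A * X * ((M / K) ^ (n + 1) * K ^ (n + 1))) * hCD

end Majorant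

theorem summable_mul_pow_of_le_geometric {g : ℕ → ℝ} {D K x : ℝ} (hg : ∀ k, 0 ≤ g k)
    (hgle : ∀ k, g k ≤ D * K ^ k) (hK : 0 < K) (hx : |x| < 1 / K) :
    Summable fun k ↦ g k * x ^ k := by
  have hKx : K * |x| < 1 := by rwa [lt_div_iff₀' hK] at hx
  refine Summable.of_norm_bounded
    ((summable_geometric_of_lt_one (by positivity) hKx).mul_left D) fun k ↦ ?_
  rw [norm_mul, norm_pow, Real.norm_of_nonneg (hg k), Real.norm_eq_abs, mul_pow, ← mul_assoc]
  gcongr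
  exact hgle k

theorem stmt_15_general (g a : ℕ → ℝ) (hg : ∀ k, 0 ≤ g k) (ha : ∀ k, 0 ≤ a k)
    (l n0 NG : ℕ) (hn0NG : 2 * n0 < NG)
    (A C D M K : ℝ) (hA : 0 < A) (hC : 0 < C) (hD : 0 < D) (hM : 0 < M) (hMK : M < K)
    (hgflat : ∀ k, k < 2 * l → g k = 0)
    (hginit : ∀ k, 2 * l ≤ k → k ≤ NG → g k ≤ D * K ^ k)
    (haC : ∀ k, n0 < k → a k ≤ C * M ^ k)
    (hrec : ∀ n, NG ≤ n →
      g (n + 1) ≤ A * ∑ k ∈ Icc 1 n, a k * a (n + 1 - k) +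
        2 * ∑ k ∈ Icc 2 (n + 2 - 2 * l), (k : ℝ) * a k * g (n + 2 - k))
    (Ψ : ℕ → ℝ)
    (hΨdef : ∀ n : ℕ, Ψ n =
      A * ((2 * ∑ k ∈ Icc 1 n0, a k * (M : ℝ)⁻¹ ^ k + C * ((n : ℝ) - 2 * n0)) *
        (C / D) * (M / K) ^ (n + 1)) +
      2 * (∑ k ∈ Icc 2 n0, (k : ℝ) * a k * K ^ (1 - (k : ℤ)) +
        C * M * (M / K) ^ n0 *
          (((n0 : ℝ) + 1) - (n0 : ℝ) * (M / K)) / (1 - M / K) ^ 2))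
    (hΨdec : ∀ n m : ℕ, NG ≤ n → n ≤ m → Ψ m ≤ Ψ n)
    (hkey : Ψ NG < 1) :
    (∀ k, g k ≤ D * K ^ k) ∧
    ∀ x : ℝ, |x| < 1 / K → Summable (fun k : ℕ => g k * x ^ k) := by
  have hK : 0 < K := hM.trans hMK
  have hbound : ∀ k, g k ≤ D * K ^ k := by
    intro k
    induction k using Nat.strong_induction_on with
    | _ k ih =>
      rcases le_or_gt k NG with hkNG | hkNG
      · rcases lt_or_ge k (2 * l) with hk | hk
        · rw [hgflat k hk]; positivity
        · exact hginit k hk hkNG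
      obtain ⟨n, rfl⟩ : ∃ n, k = n + 1 := ⟨k - 1, by omega⟩
      have hΨn : Ψ n ≤ 1 := (hΨdec NG n le_rfl (by omega)).trans hkey.le
      calc g (n + 1) ≤ _ := hrec n (by omega)
        _ ≤ Ψ n * (D * K ^ (n + 1)) := by
            rw [hΨdef n]
            exact recursion_rhs_le ha haC hA.le hC.le hD hM hMK
              (fun j hj ↦ ih j (by omega)) (by omega) (by omega)
        _ ≤ D * K ^ (n + 1) := mul_le_of_le_one_left (by positivity) hΨn
  exact ⟨hbound, fun x hx ↦ summable_mul_pow_of_le_geometric hg hbound hK hx⟩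

theorem stmt_15 (g a : ℕ → ℝ) (hg : ∀ k, 0 ≤ g k) (ha : ∀ k, 0 ≤ a k)
    (l n0 NG : ℕ) (hl : 2 ≤ l) (hn0NG : 2 * n0 < NG) (hNGl : 2 * l < NG)
    (A C D M K : ℝ) (hA : 0 < A) (hC : 0 < C) (hD : 0 < D) (hM : 0 < M) (hMK : M < K)
    (hgflat : ∀ k, k < 2 * l → g k = 0)
    (hginit : ∀ k, 2 * l ≤ k → k ≤ NG → g k ≤ D * K ^ k)
    (haC : ∀ k, n0 < k → a k ≤ C * M ^ k)
    (hrec : ∀ n, NG ≤ n →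
      g (n + 1) ≤ A * ∑ k ∈ Icc 1 n, a k * a (n + 1 - k) +
        2 * ∑ k ∈ Icc 2 (n + 2 - 2 * l), (k : ℝ) * a k * g (n + 2 - k))
    (Ψ : ℕ → ℝ)
    (hΨdef : ∀ n : ℕ, Ψ n =
      A * ((2 * ∑ k ∈ Icc 1 n0, a k * (M : ℝ)⁻¹ ^ k + C * ((n : ℝ) - 2 * n0)) *
        (C / D) * (M / K) ^ (n + 1)) +
      2 * (∑ k ∈ Icc 2 n0, (k : ℝ) * a k * K ^ (1 - (k : ℤ)) +
        C * M * (M / K) ^ n0 *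
          (((n0 : ℝ) + 1) - (n0 : ℝ) * (M / K)) / (1 - M / K) ^ 2))
    (hΨdec : ∀ n m : ℕ, NG ≤ n → n ≤ m → Ψ m ≤ Ψ n)
    (hkey : Ψ NG < 1) :
    (∀ k, g k ≤ D * K ^ k) ∧
    ∀ x : ℝ, |x| < 1 / K → Summable (fun k : ℕ => g k * x ^ k) :=
  stmt_15_general g a hg ha l n0 NG hn0NG A C D M K hA hC hD hM hMK hgflat hginit haC hrec Ψ hΨdef
    hΨdec hkey
end
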